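/- arXiv:0904.3116 — 7 statements merged into one kernel-verified Lean document; each statement's English description precedes it below -/
import Mathlib

section
/- There exists a constant c such that for all integers n ≥ 1 and k with 0 ≤ k ≤ n there exists a bipartite graph with left part L of size 2^n and right part R of size 2^k · n^c, in which every vertex of L has at most n^c neighbors, and which admits an on-line matching strategy up to size 2^k. -/
/-!
A random graph in which every left vertex picks `n ^ 10` neighbours among `2 ^ k * n ^ 10` right
vertices is, by a union bound over the sets `X` of size at most `2 ^ k` and the sets of size
`4 * #X` that might contain `N X`, a 4-expander on sets of size at most `2 ^ k`.

In such an expander a greedy strategy keeps the invariant that every set `X` of at most `s`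
unmatched left vertices has at least `2 * #X` unused neighbours. When `x` arrives, let `T` be
the union of the sets for which this is tight (tight sets are closed under union by
submodularity). The invariant for `insert x T` gives `x` an unused neighbour outside `N T`;
using it keeps every non-tight set above the bound and does not touch the tight ones.
-/

/-- An on-line matching strategy up to size `s` for the bipartite graph with
neighborhood map `N : L → Finset R`: a function `f` that assigns to every
nonempty list `(x₁, …, xᵢ)` of pairwise distinct left vertices of length at
most `s` a right vertex that is a neighbor of the last arrived element `xᵢ`
and differs from all previously assigned vertices. -/
def OnlineStrategy {L R : Type*} (N : L → Finset R) (s : ℕ) (f : List L → R) : Prop :=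
  ∀ (l : List L) (h : l ≠ []), l.Nodup → l.length ≤ s →
    f l ∈ N (l.getLast h) ∧
      ∀ l' : List L, l' ≠ [] → l' <+: l → l' ≠ l → f l' ≠ f l

open Finset

section Greedy

variable {L R : Type*} [DecidableEq L] [DecidableEq R] [Nonempty R]

-- Arrivals are listed newest first, so that the recursion peels off the latest arrival.
noncomputable def greedyMatch (N : L → Finset R) (P : Finset L → Finset R → Prop) :
    List L → List R
  | [] => []
  | x :: rest => Classical.epsilon (fun r => r ∈ N x ∧ r ∉ (greedyMatch N P rest).toFinset ∧
      P (insert x rest.toFinset) (insert r (greedyMatch N P rest).toFinset)) :: greedyMatch N P rest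

variable {N : L → Finset R} {P : Finset L → Finset R → Prop} {s : ℕ}

theorem length_greedyMatch (m : List L) : (greedyMatch N P m).length = m.length := by
  induction m <;> simp [greedyMatch, *]

theorem greedyMatch_suffix {q m : List L} (h : q <:+ m) :
    greedyMatch N P q <:+ greedyMatch N P m := by
  induction m with
  | nil => rw [List.suffix_nil.1 h]
  | cons x rest ih =>
    rcases List.suffix_cons_iff.1 h with rfl | h
    · exact List.suffix_refl _
    · exact (ih h).trans (List.suffix_cons _ _)

theorem headD_greedyMatch_mem {q : List L} (hq : q ≠ []) (d : R) :
    (greedyMatch N P q).headD d ∈ greedyMatch N P q := by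
  obtain ⟨x, rest, rfl⟩ := List.exists_cons_of_ne_nil hq
  exact List.mem_cons_self

variable (hstep : ∀ A M x, P A M → #M < s → x ∉ A →
  ∃ r ∈ N x, r ∉ M ∧ P (insert x A) (insert r M))
include hstep

theorem greedyMatch_cons_spec {x : L} {rest : List L}
    (hP : P rest.toFinset (greedyMatch N P rest).toFinset) (hlen : rest.length < s)
    (hx : x ∉ rest) :
    ∃ r, greedyMatch N P (x :: rest) = r :: greedyMatch N P rest ∧ r ∈ N x ∧
      r ∉ greedyMatch N P rest ∧
        P (insert x rest.toFinset) (insert r (greedyMatch N P rest).toFinset) := by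
  have hM : #(greedyMatch N P rest).toFinset < s :=
    (List.toFinset_card_le _).trans_lt (by rwa [length_greedyMatch])
  obtain ⟨hr, hrM, hrP⟩ := Classical.epsilon_spec (hstep _ _ x hP hM (by simpa using hx))
  exact ⟨_, rfl, hr, by simpa using hrM, hrP⟩

theorem greedyMatch_invariant (h0 : P ∅ ∅) {m : List L} (hm : m.Nodup) (hlen : m.length ≤ s) :
    P m.toFinset (greedyMatch N P m).toFinset := by
  induction m with
  | nil => simpa [greedyMatch] using h0
  | cons x rest ih =>
    have hlen' : rest.length < s := by simp only [List.length_cons] at hlen; omega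
    obtain ⟨r, hr, -, -, hP⟩ := greedyMatch_cons_spec hstep (ih hm.of_cons hlen'.le) hlen'
      (List.nodup_cons.1 hm).1
    rwa [hr, List.toFinset_cons, List.toFinset_cons]

theorem exists_onlineStrategy_of_invariant (h0 : P ∅ ∅) : ∃ f, OnlineStrategy N s f := by
  refine ⟨fun l => (greedyMatch N P l.reverse).headD (Classical.arbitrary R), ?_⟩
  intro l hl hnd hlen
  obtain ⟨rest, x, rfl⟩ := (List.eq_nil_or_concat' l).resolve_left hl
  have hnd' : (x :: rest.reverse).Nodup := by
    simpa using List.nodup_reverse.2 hnd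
  have hlen' : rest.reverse.length < s := by simp at hlen ⊢; omega
  obtain ⟨r, hr, hrx, hrM, -⟩ := greedyMatch_cons_spec hstep
    (greedyMatch_invariant hstep h0 hnd'.of_cons hlen'.le) hlen' (List.nodup_cons.1 hnd').1
  simp only [List.reverse_append, List.reverse_cons, List.reverse_nil, List.nil_append,
    List.cons_append, hr, List.headD_cons, List.getLast_append_singleton]
  refine ⟨hrx, fun l' hl' hpre hne => ?_⟩
  have hsuf : l'.reverse <:+ rest.reverse :=
    List.reverse_suffix.2 ((List.prefix_concat_iff.1 hpre).resolve_left hne)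
  exact fun h => hrM (h ▸ (greedyMatch_suffix hsuf).subset
    (headD_greedyMatch_mem (by simpa using hl') _))

end Greedy

section

variable {L R : Type*} [DecidableEq L] [DecidableEq R] [Nonempty R]

theorem exists_onlineStrategy_one {N : L → Finset R} (hN : ∀ x, (N x).Nonempty) :
    ∃ f, OnlineStrategy N 1 f :=
  exists_onlineStrategy_of_invariant (P := fun _ _ => True)
    (fun _ M x _ hM _ => ⟨(hN x).choose, (hN x).choose_spec,
      by simp [card_eq_zero.1 (Nat.lt_one_iff.1 hM)], trivial⟩) trivial

theorem exists_onlineStrategy_of_injective {ι : L → R} (hι : Function.Injective ι) (s : ℕ) :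
    ∃ f, OnlineStrategy (fun x => {ι x}) s f :=
  exists_onlineStrategy_of_invariant (P := fun A M => M ⊆ A.image ι)
    (fun _ _ x hM _ hx => ⟨ι x, mem_singleton_self _,
      fun h => hx (by simpa [hι.eq_iff] using hM h),
      by simpa [image_insert] using insert_subset_insert (ι x) hM⟩) (by simp)

end

section Reserve

variable {L R : Type*} [DecidableEq R]

def IsExpanding (N : L → Finset R) (s : ℕ) : Prop :=
  ∀ X : Finset L, #X ≤ s → 4 * #X ≤ #(X.biUnion N)

def HasReserve (N : L → Finset R) (s : ℕ) (A : Finset L) (M : Finset R) : Prop :=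
  ∀ X : Finset L, Disjoint X A → #X ≤ s → 2 * #X ≤ #(X.biUnion N \ M)

def IsTight (N : L → Finset R) (s : ℕ) (A : Finset L) (M : Finset R) (X : Finset L) : Prop :=
  Disjoint X A ∧ #X ≤ s ∧ #(X.biUnion N \ M) ≤ 2 * #X

variable {N : L → Finset R} {s : ℕ} {A A' X Y : Finset L} {M : Finset R}

theorem HasReserve.mono (h : HasReserve N s A M) (hA : A ⊆ A') : HasReserve N s A' M :=
  fun X hX => h X (hX.mono_right hA)

theorem IsTight.two_mul_card_le (hN : IsExpanding N s) (hX : IsTight N s A M X) :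
    2 * #X ≤ #M := by
  have := hN X hX.2.1
  have := card_le_card_sdiff_add_card (s := X.biUnion N) (t := M)
  have := hX.2.2
  omega

theorem IsTight.union [DecidableEq L] (hN : IsExpanding N s) (hres : HasReserve N s A M)
    (hM : #M < s) (hX : IsTight N s A M X) (hY : IsTight N s A M Y) :
    IsTight N s A M (X ∪ Y) := by
  have := hX.two_mul_card_le hN
  have := hY.two_mul_card_le hN
  have hXY : #(X ∪ Y) ≤ s := (card_union_le X Y).trans (by omega)
  refine ⟨disjoint_union_left.2 ⟨hX.1, hY.1⟩, hXY, ?_⟩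
  -- submodularity of `X ↦ #(N X \ M)`, with the reserve bound on `X ∩ Y`
  have hinter : 2 * #(X ∩ Y) ≤ #((X ∩ Y).biUnion N \ M) :=
    hres _ (hX.1.mono_left inter_subset_left) ((card_le_card inter_subset_left).trans hX.2.1)
  have hsub : (X ∩ Y).biUnion N \ M ⊆ (X.biUnion N \ M) ∩ (Y.biUnion N \ M) :=
    subset_inter (sdiff_subset_sdiff (biUnion_subset_biUnion_of_subset_left N inter_subset_left)
      le_rfl) (sdiff_subset_sdiff (biUnion_subset_biUnion_of_subset_left N inter_subset_right)
      le_rfl)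
  have := card_le_card hsub
  have := card_union_add_card_inter (X.biUnion N \ M) (Y.biUnion N \ M)
  have := card_union_add_card_inter X Y
  have := hX.2.2
  have := hY.2.2
  rw [union_biUnion, union_sdiff_distrib]
  omega

theorem exists_isTight_forall_subset [Fintype L] [DecidableEq L] (hN : IsExpanding N s)
    (hres : HasReserve N s A M) (hM : #M < s) :
    ∃ T, IsTight N s A M T ∧ ∀ X, IsTight N s A M X → X ⊆ T := by
  classical
  refine ⟨(univ.filter (IsTight N s A M)).sup id, ?_,
    fun X hX => le_sup (f := id) (mem_filter.2 ⟨mem_univ X, hX⟩)⟩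
  refine sup_induction ⟨disjoint_empty_left A, by simp, by simp⟩
    (fun X hX Y hY => hX.union hN hres hM hY) (fun X hX => (mem_filter.1 hX).2)

theorem HasReserve.exists_insert [Fintype L] [DecidableEq L] (hN : IsExpanding N s)
    (hres : HasReserve N s A M) (hM : #M < s) {x : L} (hx : x ∉ A) :
    ∃ r ∈ N x, r ∉ M ∧ HasReserve N s (insert x A) (insert r M) := by
  obtain ⟨T, hT, hTmax⟩ := exists_isTight_forall_subset hN (hres.mono (subset_insert x A)) hM
  have hxT : x ∉ T := fun h => disjoint_left.1 hT.1 h (mem_insert_self x A)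
  have := hT.two_mul_card_le hN
  have hxTA : Disjoint (insert x T) A :=
    disjoint_insert_left.2 ⟨hx, hT.1.mono_right (subset_insert x A)⟩
  have hcount := hres (insert x T) hxTA (by rw [card_insert_of_notMem hxT]; omega)
  have hsplit :
      (insert x T).biUnion N \ M ⊆ ((N x \ T.biUnion N) \ M) ∪ (T.biUnion N \ M) := by
    intro r
    simp only [biUnion_insert, mem_union, mem_sdiff]
    tauto
  have hfree : ((N x \ T.biUnion N) \ M).Nonempty := by
    have := (card_le_card hsplit).trans (card_union_le _ _)
    have := hT.2.2
    rw [card_insert_of_notMem hxT] at hcount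
    rw [← card_pos]
    omega
  obtain ⟨r, hr⟩ := hfree
  simp only [mem_sdiff] at hr
  obtain ⟨⟨hrx, hrT⟩, hrM⟩ := hr
  refine ⟨r, hrx, hrM, fun X hXA hXs => ?_⟩
  rw [sdiff_insert]
  by_cases hXT : IsTight N s (insert x A) M X
  · have hrX : r ∉ X.biUnion N \ M := fun h =>
      hrT (biUnion_subset_biUnion_of_subset_left N (hTmax X hXT) (mem_sdiff.1 h).1)
    rw [erase_eq_of_notMem hrX]
    exact hres X (hXA.mono_right (subset_insert x A)) hXs
  · have : 2 * #X < #(X.biUnion N \ M) := by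
      simp only [IsTight, not_and, not_le] at hXT
      exact hXT hXA hXs
    have := pred_card_le_card_erase (s := X.biUnion N \ M) (a := r)
    omega

end Reserve

theorem exists_onlineStrategy_of_isExpanding {L R : Type*} [Fintype L] [DecidableEq L]
    [DecidableEq R] [Nonempty R] {N : L → Finset R} {s : ℕ} (hN : IsExpanding N s) :
    ∃ f, OnlineStrategy N s f :=
  exists_onlineStrategy_of_invariant (P := HasReserve N s)
    (fun _ _ _ hres hM hx => hres.exists_insert hN hM hx)
    (fun X _ hX => by rw [sdiff_empty]; have := hN X hX; omega)

theorem Finset.sum_lt_of_card_mul_lt {ι : Type*} {t : Finset ι} {a : ι → ℕ} {T : ℕ}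
    (ht : t.Nonempty) (h : ∀ i ∈ t, #t * a i < T) : ∑ i ∈ t, a i < T := by
  refine Nat.lt_of_mul_lt_mul_left (a := #t) ?_
  calc #t * ∑ i ∈ t, a i = ∑ i ∈ t, #t * a i := mul_sum _ _ _
    _ < ∑ _i ∈ t, T := sum_lt_sum_of_nonempty ht h
    _ = #t * T := by rw [sum_const, smul_eq_mul]

section RandomGraph

variable {L D R : Type*} [Fintype L] [DecidableEq L] [Fintype D] [DecidableEq D]
  [Fintype R] [DecidableEq R]

def graphOf (g : L → D → R) (x : L) : Finset R := univ.image (g x)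

theorem card_filter_forall_apply_mem (X : Finset L) (Y : Finset R) :
    #{g : L → D → R | ∀ x ∈ X, ∀ j, g x j ∈ Y} =
      (#Y ^ Fintype.card D) ^ #X * (Fintype.card R ^ Fintype.card D) ^ (Fintype.card L - #X) := by
  have : ({g : L → D → R | ∀ x ∈ X, ∀ j, g x j ∈ Y} : Finset _) =
      Fintype.piFinset fun x => if x ∈ X then Fintype.piFinset fun _ : D => Y else univ := by
    ext g
    simp only [mem_filter, mem_univ, true_and, Fintype.mem_piFinset]
    refine forall_congr' fun x => ?_
    split_ifs <;> simp [*, Fintype.mem_piFinset]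
  rw [this, Fintype.card_piFinset]
  simp only [apply_ite card, Fintype.card_piFinset, prod_const, card_univ, prod_ite,
    filter_mem_eq_inter, univ_inter, Fintype.card_fun]
  rw [filter_not, filter_mem_eq_inter, univ_inter, ← compl_eq_univ_sdiff, card_compl]

theorem card_filter_card_biUnion_graphOf_le (X : Finset L) {t : ℕ} (ht : t ≤ Fintype.card R) :
    #{g : L → D → R | #(X.biUnion (graphOf g)) ≤ t} ≤ (Fintype.card R).choose t *
      ((t ^ Fintype.card D) ^ #X * (Fintype.card R ^ Fintype.card D) ^ (Fintype.card L - #X)) := by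
  have hcover : ({g : L → D → R | #(X.biUnion (graphOf g)) ≤ t} : Finset _) ⊆
      (powersetCard t univ).biUnion fun Y => {g | ∀ x ∈ X, ∀ j, g x j ∈ Y} := by
    intro g hg
    obtain ⟨Y, hXY, hY⟩ := exists_superset_card_eq (mem_filter.1 hg).2 ht
    refine mem_biUnion.2 ⟨Y, mem_powersetCard.2 ⟨subset_univ Y, hY⟩,
      mem_filter.2 ⟨mem_univ g, fun x hx j => ?_⟩⟩
    exact hXY (mem_biUnion.2 ⟨x, hx, mem_image_of_mem _ (mem_univ j)⟩)
  calc _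
      ≤ ∑ Y ∈ powersetCard t univ, #{g : L → D → R | ∀ x ∈ X, ∀ j, g x j ∈ Y} :=
        (card_le_card hcover).trans card_biUnion_le
    _ = _ := by
      rw [sum_congr rfl fun Y hY => by
          rw [card_filter_forall_apply_mem, (mem_powersetCard.1 hY).2],
        sum_const, card_powersetCard, card_univ, smul_eq_mul]

theorem exists_isExpanding (s : ℕ) (hs : 4 * s ≤ Fintype.card R)
    (hcount : ∑ m ∈ Icc 1 s, (Fintype.card L).choose m * ((Fintype.card R).choose (4 * m) *
        (((4 * m) ^ Fintype.card D) ^ m *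
          (Fintype.card R ^ Fintype.card D) ^ (Fintype.card L - m))) <
      (Fintype.card R ^ Fintype.card D) ^ Fintype.card L) :
    ∃ g : L → D → R, IsExpanding (graphOf g) s := by
  by_contra! hbad
  have hcover : (univ : Finset (L → D → R)) ⊆ (Icc 1 s).biUnion fun m =>
      (powersetCard m univ).biUnion fun X => {g | #(X.biUnion (graphOf g)) ≤ 4 * m} := by
    intro g _
    obtain ⟨X, hXs, hX⟩ : ∃ X : Finset L, #X ≤ s ∧ #(X.biUnion (graphOf g)) < 4 * #X := by
      simpa [IsExpanding] using hbad g
    refine mem_biUnion.2 ⟨#X, mem_Icc.2 ⟨by omega, hXs⟩, mem_biUnion.2 ⟨X, ?_, ?_⟩⟩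
    · exact mem_powersetCard.2 ⟨subset_univ X, rfl⟩
    · exact mem_filter.2 ⟨mem_univ g, hX.le⟩
  refine (hcount.trans_le ?_).false
  calc (Fintype.card R ^ Fintype.card D) ^ Fintype.card L = #(univ : Finset (L → D → R)) := by
        simp
    _ ≤ _ := (card_le_card hcover).trans card_biUnion_le
    _ ≤ _ := sum_le_sum fun m hm => card_biUnion_le.trans <| by
        have hm4 : 4 * m ≤ Fintype.card R := by have := (mem_Icc.1 hm).2; omega
        refine (sum_le_card_nsmul _ _ ((Fintype.card R).choose (4 * m) * (((4 * m) ^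
          Fintype.card D) ^ m * (Fintype.card R ^ Fintype.card D) ^ (Fintype.card L - m)))
          fun X hX => ?_).trans_eq ?_
        · simpa only [(mem_powersetCard.1 hX).2] using
            card_filter_card_biUnion_graphOf_le (D := D) X hm4
        · rw [card_powersetCard, card_univ, smul_eq_mul]

end RandomGraph

theorem two_pow_mul_lt_pow_self (n k : ℕ) (hn : 2 ≤ n) (hk : k ≤ n) :
    2 ^ (2 * n) * (2 ^ k * n ^ 10) ^ 4 * 4 ^ n ^ 10 < (n ^ 10) ^ n ^ 10 := by
  have hB : 2 ^ k * n ^ 10 ≤ 2 ^ (11 * n) :=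
    calc 2 ^ k * n ^ 10 ≤ 2 ^ n * (2 ^ n) ^ 10 :=
          Nat.mul_le_mul (Nat.pow_le_pow_right two_pos hk)
            (Nat.pow_le_pow_left Nat.lt_two_pow_self.le 10)
      _ = 2 ^ (11 * n) := by ring
  have hd : 2 ^ 9 * n ≤ n ^ 10 :=
    calc 2 ^ 9 * n ≤ n ^ 9 * n := Nat.mul_le_mul_right n (Nat.pow_le_pow_left hn 9)
      _ = n ^ 10 := by ring
  calc 2 ^ (2 * n) * (2 ^ k * n ^ 10) ^ 4 * 4 ^ n ^ 10
      ≤ 2 ^ (2 * n) * (2 ^ (11 * n)) ^ 4 * 4 ^ n ^ 10 := by gcongr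
    _ = 2 ^ (46 * n + 2 * n ^ 10) := by
        rw [show (4 : ℕ) ^ n ^ 10 = 2 ^ (2 * n ^ 10) by rw [pow_mul]; norm_num]
        ring
    _ < 2 ^ (10 * n ^ 10) := Nat.pow_lt_pow_right (by norm_num) (by omega)
    _ = (2 ^ 10) ^ n ^ 10 := by rw [pow_mul]
    _ ≤ (n ^ 10) ^ n ^ 10 := Nat.pow_le_pow_left (Nat.pow_le_pow_left hn 10) _

theorem pow_mul_choose_mul_choose_lt (n k m : ℕ) (hn : 2 ≤ n) (hk : k ≤ n)
    (hm : m ∈ Icc 1 (2 ^ k)) :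
    2 ^ k * ((2 ^ n).choose m * ((2 ^ k * n ^ 10).choose (4 * m) *
      (((4 * m) ^ n ^ 10) ^ m * ((2 ^ k * n ^ 10) ^ n ^ 10) ^ (2 ^ n - m)))) <
      ((2 ^ k * n ^ 10) ^ n ^ 10) ^ 2 ^ n := by
  obtain ⟨hm1, hmk⟩ := mem_Icc.1 hm
  have hkn : 2 ^ k ≤ 2 ^ n := Nat.pow_le_pow_right two_pos hk
  have hmain :
      2 ^ k * (2 ^ n).choose m * (2 ^ k * n ^ 10).choose (4 * m) * ((4 * m) ^ n ^ 10) ^ m <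
        ((2 ^ k * n ^ 10) ^ n ^ 10) ^ m :=
    calc 2 ^ k * (2 ^ n).choose m * (2 ^ k * n ^ 10).choose (4 * m) * ((4 * m) ^ n ^ 10) ^ m
        ≤ (2 ^ n) ^ m * (2 ^ n) ^ m * ((2 ^ k * n ^ 10) ^ 4) ^ m *
            ((4 * 2 ^ k) ^ n ^ 10) ^ m := by
          refine Nat.mul_le_mul
            (Nat.mul_le_mul (Nat.mul_le_mul ?_ (Nat.choose_le_pow _ _)) ?_) ?_
          · exact hkn.trans (Nat.le_self_pow (by omega) _)
          · rw [← pow_mul, mul_comm 4 m]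
            exact Nat.choose_le_pow _ _
          · gcongr
      _ = (2 ^ (2 * n) * (2 ^ k * n ^ 10) ^ 4 * 4 ^ n ^ 10) ^ m * ((2 ^ k) ^ n ^ 10) ^ m := by
          ring
      _ < ((n ^ 10) ^ n ^ 10) ^ m * ((2 ^ k) ^ n ^ 10) ^ m :=
          Nat.mul_lt_mul_of_pos_right (Nat.pow_lt_pow_left (two_pow_mul_lt_pow_self n k hn hk)
            (by omega)) (by positivity)
      _ = ((2 ^ k * n ^ 10) ^ n ^ 10) ^ m := by ring
  calc _ = 2 ^ k * (2 ^ n).choose m * (2 ^ k * n ^ 10).choose (4 * m) * ((4 * m) ^ n ^ 10) ^ m *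
        ((2 ^ k * n ^ 10) ^ n ^ 10) ^ (2 ^ n - m) := by ring
    _ < ((2 ^ k * n ^ 10) ^ n ^ 10) ^ m * ((2 ^ k * n ^ 10) ^ n ^ 10) ^ (2 ^ n - m) :=
        Nat.mul_lt_mul_of_pos_right hmain (by positivity)
    _ = _ := by rw [← pow_add, Nat.add_sub_cancel' (hmk.trans hkn)]

theorem exists_isExpanding_pow (n k : ℕ) (hn : 2 ≤ n) (hk : k ≤ n) :
    ∃ g : Fin (2 ^ n) → Fin (n ^ 10) → Fin (2 ^ k * n ^ 10),
      IsExpanding (graphOf g) (2 ^ k) := by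
  have h4 : 4 ≤ n ^ 10 := (show 4 ≤ 2 ^ 10 by norm_num).trans (Nat.pow_le_pow_left hn 10)
  refine exists_isExpanding _ ?_ ?_ <;> simp only [Fintype.card_fin]
  · nlinarith [Nat.one_le_two_pow (n := k)]
  refine sum_lt_of_card_mul_lt (nonempty_Icc.2 Nat.one_le_two_pow) fun m hm => ?_
  simpa using pow_mul_choose_mul_choose_lt n k m hn hk hm

/-- (OM): there is a constant `c` such that for all `n ≥ 1` and `k ≤ n` there
is a bipartite graph with left part of size `2^n`, right part of size
`2^k · n^c`, left degrees at most `n^c`, admitting on-line matching up to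
size `2^k`. -/
theorem online_matchings_exist :
    ∃ c : ℕ, ∀ n k : ℕ, 1 ≤ n → k ≤ n →
      ∃ N : Fin (2 ^ n) → Finset (Fin (2 ^ k * n ^ c)),
        (∀ x, (N x).card ≤ n ^ c) ∧
        ∃ f : List (Fin (2 ^ n)) → Fin (2 ^ k * n ^ c),
          OnlineStrategy N (2 ^ k) f := by
  refine ⟨10, fun n k hn hk => ?_⟩
  obtain rfl | hn2 : n = 1 ∨ 2 ≤ n := by omega
  · obtain rfl | rfl : k = 0 ∨ k = 1 := by omega
    · have : Nonempty (Fin (2 ^ 0 * 1 ^ 10)) := ⟨⟨0, by norm_num⟩⟩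
      exact ⟨fun _ => univ, fun _ => by simp, exists_onlineStrategy_one fun _ => univ_nonempty⟩
    · exact ⟨fun x => {Fin.cast (by norm_num) x}, fun _ => by simp,
        exists_onlineStrategy_of_injective (Fin.cast_injective (by norm_num)) _⟩
  · have : Nonempty (Fin (2 ^ k * n ^ 10)) := ⟨⟨0, by positivity⟩⟩
    obtain ⟨g, hg⟩ := exists_isExpanding_pow n k hn2 hk
    exact ⟨graphOf g, fun x => card_image_le.trans (by simp),
      exists_onlineStrategy_of_isExpanding hg⟩
end

section
/- There exists a constant c such that for all integers n ≥ 1 and k with 0 ≤ k ≤ n there exists a bipartite graph with left part L of size 2^n and right part R of size 2^k · n^c, in which every vertex of L has at most n^c neighbors, and such that for every subset X ⊆ L of size t ≤ 2^k the set N(X) of all neighbors of elements of X contains at least t elements. -/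
/-!
A counting version of the probabilistic method. Let every left vertex pick `m = n³` neighbours
arbitrarily, i.e. consider all `|R|^(m|L|)` maps `f : L → Fin m → R`. If Hall's condition fails
for some `X` with `#X = t ≤ s = 2^k`, then `f` maps `X` into a set `Y` of size `t - 1`, and at most
`C(|L|, t) C(|R|, t - 1) (t - 1)^(mt) |R|^(m(|L| - t))` maps do that. For `|R| = s m` this is at most
a fraction `(|L|² |R| / m^m)^t / s` of all maps, so if `|L|² |R| < m^m` the bad maps, summed over
`t ≤ s`, do not exhaust all of them. With `|L| = 2^n` that holds as soon as `n ≥ 2`.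
-/

open Finset Fintype

section Counting

variable {α β : Type*} [Fintype α] [DecidableEq α] [Fintype β]

def HallUpTo [DecidableEq β] (N : α → Finset β) (s : ℕ) : Prop :=
  ∀ X : Finset α, #X ≤ s → #X ≤ #(X.biUnion N)

instance [DecidableEq β] (N : α → Finset β) (s : ℕ) : Decidable (HallUpTo N s) :=
  inferInstanceAs (Decidable (∀ X : Finset α, #X ≤ s → #X ≤ #(X.biUnion N)))

def mapsInto (m : ℕ) (X : Finset α) (Y : Finset β) : Finset (α → Fin m → β) :=
  piFinset fun x => if x ∈ X then piFinset fun _ => Y else univ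

lemma mem_mapsInto {m : ℕ} {X : Finset α} {Y : Finset β} {f : α → Fin m → β} :
    f ∈ mapsInto m X Y ↔ ∀ x ∈ X, ∀ i, f x i ∈ Y := by
  simp only [mapsInto, mem_piFinset]
  refine forall_congr' fun x => ?_
  by_cases hx : x ∈ X <;> simp [hx]

lemma card_mapsInto (m : ℕ) (X : Finset α) (Y : Finset β) :
    #(mapsInto m X Y) = (#Y ^ m) ^ #X * (card β ^ m) ^ (card α - #X) := by
  simp only [mapsInto, card_piFinset, apply_ite card, prod_ite, prod_const,
    card_univ, card_fun, Fintype.card_fin]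
  rw [filter_mem_eq_inter, univ_inter, filter_not, filter_mem_eq_inter, univ_inter,
    ← compl_eq_univ_sdiff, card_compl]

variable [DecidableEq β]

lemma exists_mem_mapsInto_of_not_hallUpTo {m s : ℕ} (hs : s ≤ card β) {f : α → Fin m → β}
    (hf : ¬HallUpTo (fun x => univ.image (f x)) s) :
    ∃ X : Finset α, ∃ Y : Finset β, #X ∈ Icc 1 s ∧ #Y = #X - 1 ∧ f ∈ mapsInto m X Y := by
  simp only [HallUpTo, not_forall, not_le, exists_prop] at hf
  obtain ⟨X, hXs, hNX⟩ := hf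
  obtain ⟨Y, hNY, -, hY⟩ := exists_subsuperset_card_eq (subset_univ (X.biUnion _))
    (Nat.le_sub_one_of_lt hNX) (by rw [card_univ]; omega)
  refine ⟨X, Y, mem_Icc.2 ⟨by omega, hXs⟩, hY, mem_mapsInto.2 fun x hx i => hNY ?_⟩
  exact mem_biUnion.2 ⟨x, hx, mem_image_of_mem _ (mem_univ i)⟩

lemma card_filter_not_hallUpTo_le (m s : ℕ) (hs : s ≤ card β) :
    #{f : α → Fin m → β | ¬HallUpTo (fun x => univ.image (f x)) s} ≤
      ∑ t ∈ Icc 1 s, (card α).choose t * (card β).choose (t - 1) * ((t - 1) ^ m) ^ t *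
        (card β ^ m) ^ (card α - t) := by
  calc #{f : α → Fin m → β | ¬HallUpTo (fun x => univ.image (f x)) s}
      ≤ #((Icc 1 s).biUnion fun t => (powersetCard t univ ×ˢ powersetCard (t - 1) univ).biUnion
          fun p => mapsInto m p.1 p.2) := by
        refine card_le_card fun f hf => ?_
        obtain ⟨X, Y, hX, hY, hfXY⟩ := exists_mem_mapsInto_of_not_hallUpTo hs (mem_filter.1 hf).2
        simp only [mem_biUnion, mem_product, mem_powersetCard_univ]
        exact ⟨#X, hX, (X, Y), ⟨rfl, hY⟩, hfXY⟩
    _ ≤ ∑ t ∈ Icc 1 s, ∑ p ∈ powersetCard t univ ×ˢ powersetCard (t - 1) univ,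
          #(mapsInto m p.1 p.2) :=
        card_biUnion_le.trans (sum_le_sum fun _ _ => card_biUnion_le)
    _ = _ := by
        refine Finset.sum_congr rfl fun t _ => ?_
        have hconst : ∀ p ∈ powersetCard t (univ : Finset α) ×ˢ
            powersetCard (t - 1) (univ : Finset β),
            #(mapsInto m p.1 p.2) = ((t - 1) ^ m) ^ t * (card β ^ m) ^ (card α - t) := by
          intro p hp
          rw [mem_product, mem_powersetCard_univ, mem_powersetCard_univ] at hp
          rw [card_mapsInto, hp.1, hp.2]
        rw [Finset.sum_congr rfl hconst, sum_const, card_product, card_powersetCard,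
          card_powersetCard, card_univ, card_univ, smul_eq_mul]
        ring

theorem exists_hallUpTo_of_sum_lt (m s : ℕ) (hs : s ≤ card β)
    (hsum : ∑ t ∈ Icc 1 s, (card α).choose t * (card β).choose (t - 1) * ((t - 1) ^ m) ^ t *
        (card β ^ m) ^ (card α - t) < (card β ^ m) ^ card α) :
    ∃ N : α → Finset β, (∀ x, #(N x) ≤ m) ∧ HallUpTo N s := by
  obtain ⟨f, -, hf⟩ := exists_mem_notMem_of_card_lt_card (t := univ) <|
    (card_filter_not_hallUpTo_le (α := α) m s hs).trans_lt (by simpa [card_univ] using hsum)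
  refine ⟨fun x => univ.image (f x), fun x => card_image_le.trans (by simp), ?_⟩
  simpa using hf

end Counting

lemma mul_choose_mul_choose_lt {A s m t : ℕ} (hsA : s ≤ A) (hm : 0 < m)
    (h : A ^ 2 * (s * m) < m ^ m) (ht : t ∈ Icc 1 s) :
    s * (A.choose t * (s * m).choose (t - 1) * ((t - 1) ^ m) ^ t * ((s * m) ^ m) ^ (A - t)) <
      ((s * m) ^ m) ^ A := by
  obtain ⟨ht1, hts⟩ := mem_Icc.1 ht
  have hB : 0 < s * m := Nat.mul_pos (by omega) hm
  have hsAt : s ≤ A ^ t := hsA.trans (Nat.le_self_pow (by omega) A)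
  have hchoose : (s * m).choose (t - 1) ≤ (s * m) ^ t :=
    (Nat.choose_le_pow _ _).trans (Nat.pow_le_pow_right hB (Nat.sub_le t 1))
  calc s * (A.choose t * (s * m).choose (t - 1) * ((t - 1) ^ m) ^ t * ((s * m) ^ m) ^ (A - t))
      ≤ A ^ t * (A ^ t * (s * m) ^ t * (s ^ m) ^ t * ((s * m) ^ m) ^ (A - t)) := by
        gcongr
        · exact Nat.choose_le_pow _ _
        · omega
    _ = (A ^ 2 * (s * m)) ^ t * (s ^ m) ^ t * ((s * m) ^ m) ^ (A - t) := by ring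
    _ < (m ^ m) ^ t * (s ^ m) ^ t * ((s * m) ^ m) ^ (A - t) := by
        gcongr
        exact pow_pos (pow_pos (by omega) m) t
    _ = ((s * m) ^ m) ^ A := by
        rw [← mul_pow, ← mul_pow, mul_comm m s, ← pow_add, Nat.add_sub_cancel' (hts.trans hsA)]

lemma sum_choose_mul_choose_lt {A s m : ℕ} (hs : 1 ≤ s) (hsA : s ≤ A) (hm : 0 < m)
    (h : A ^ 2 * (s * m) < m ^ m) :
    ∑ t ∈ Icc 1 s, A.choose t * (s * m).choose (t - 1) * ((t - 1) ^ m) ^ t *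
      ((s * m) ^ m) ^ (A - t) < ((s * m) ^ m) ^ A := by
  refine Nat.lt_of_mul_lt_mul_left (a := s) ?_
  calc s * ∑ t ∈ Icc 1 s, A.choose t * (s * m).choose (t - 1) * ((t - 1) ^ m) ^ t *
        ((s * m) ^ m) ^ (A - t)
      < ∑ _t ∈ Icc 1 s, ((s * m) ^ m) ^ A := by
        rw [mul_sum]
        exact sum_lt_sum_of_nonempty ⟨1, mem_Icc.2 ⟨le_rfl, hs⟩⟩
          fun t ht => mul_choose_mul_choose_lt hsA hm h ht
    _ = s * ((s * m) ^ m) ^ A := by simp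

lemma two_pow_sq_mul_lt_cube_pow_cube {n k : ℕ} (hn : 2 ≤ n) (hk : k ≤ n) :
    (2 ^ n) ^ 2 * (2 ^ k * n ^ 3) < (n ^ 3) ^ (n ^ 3) := by
  calc (2 ^ n) ^ 2 * (2 ^ k * n ^ 3) ≤ (2 ^ n) ^ 2 * (2 ^ n * n ^ 3) := by gcongr; norm_num
    _ = 2 ^ (3 * n) * n ^ 3 := by ring
    _ ≤ n ^ (3 * n) * n ^ 3 := by gcongr
    _ = n ^ (3 * n + 3) := by ring
    _ < n ^ (3 * n ^ 3) :=
        Nat.pow_lt_pow_right hn (by nlinarith [pow_le_pow_left₀ (by norm_num) hn 2])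
    _ = (n ^ 3) ^ (n ^ 3) := by ring

/-- Off-line version of (OM): there is a constant `c` such that for all
`n ≥ 1` and `k ≤ n` there is a bipartite graph with left part of size `2^n`,
right part of size `2^k · n^c`, each left vertex having at most `n^c`
neighbors, such that every set `X` of at most `2^k` left vertices has at
least `#X` neighbors (Hall's condition up to size `2^k`). -/
theorem offline_matchings_exist :
    ∃ c : ℕ, ∀ n k : ℕ, 1 ≤ n → k ≤ n →
      ∃ N : Fin (2 ^ n) → Finset (Fin (2 ^ k * n ^ c)),
        (∀ x, (N x).card ≤ n ^ c) ∧
        ∀ X : Finset (Fin (2 ^ n)), X.card ≤ 2 ^ k →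
          X.card ≤ (X.biUnion N).card := by
  refine ⟨3, fun n k hn hk => ?_⟩
  have hsum : ∑ t ∈ Icc 1 (2 ^ k), (2 ^ n).choose t * (2 ^ k * n ^ 3).choose (t - 1) *
      ((t - 1) ^ n ^ 3) ^ t * ((2 ^ k * n ^ 3) ^ n ^ 3) ^ (2 ^ n - t) <
      ((2 ^ k * n ^ 3) ^ n ^ 3) ^ 2 ^ n := by
    obtain rfl | hn2 : n = 1 ∨ 2 ≤ n := by omega
    -- for `n = 1` the degree `n ^ 3 = 1` is too small for the estimate; the sum is evaluated instead
    · interval_cases k <;> decide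
    · exact sum_choose_mul_choose_lt Nat.one_le_two_pow (Nat.pow_le_pow_right two_pos hk)
        (by positivity) (two_pow_sq_mul_lt_cube_pow_cube hn2 hk)
  obtain ⟨N, hdeg, hHall⟩ := exists_hallUpTo_of_sum_lt (α := Fin (2 ^ n))
    (β := Fin (2 ^ k * n ^ 3)) (n ^ 3) (2 ^ k)
    (by simpa using Nat.le_mul_of_pos_right (2 ^ k) (by positivity : 0 < n ^ 3))
    (by simpa only [Fintype.card_fin] using hsum)
  exact ⟨N, hdeg, hHall⟩
end

section
/- For all integers n ≥ 2 and k with 0 ≤ k ≤ n there exists a bipartite graph with left part L of size 2^n and right part R of size 2^k · n², in which every vertex of L has at most n² neighbors, and such that for every subset X ⊆ L of size t ≤ 2^k the set N(X) of all neighbors of elements of X contains at least t elements. -/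
/-!
Let every left vertex choose its `n²` neighbours as an arbitrary map `Fin (n²) → R`, with
`|R| = m = 2^k n²`. A set `X` of `t` left vertices violating Hall's condition has all its
neighbours inside some `(t-1)`-subset `Y` of `R`, and for fixed `X`, `Y` only a fraction
`((t-1)/m)^(n² t)` of all maps does this. Summing over `X` and `Y`, for each `t ≤ 2^k` at most a
`2^-(k+1)` fraction of the maps is bad, so less than all of them are bad in total.
-/

open Finset

namespace OfflineMatching

section Bipartite

variable {α β ι : Type*} [Fintype ι] [DecidableEq β]

def neighborhood (f : α → ι → β) (x : α) : Finset β := univ.image (f x)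

theorem card_neighborhood_le (f : α → ι → β) (x : α) :
    #(neighborhood f x) ≤ Fintype.card ι :=
  card_image_le

variable [Fintype α] [Fintype β] [DecidableEq α] [DecidableEq ι]

variable (ι) in
def confined (X : Finset α) (Y : Finset β) : Finset (α → ι → β) :=
  Fintype.piFinset fun x => if x ∈ X then Fintype.piFinset fun _ => Y else univ

theorem mem_confined {X : Finset α} {Y : Finset β} {f : α → ι → β} :
    f ∈ confined ι X Y ↔ X.biUnion (neighborhood f) ⊆ Y := by
  simp only [confined, Fintype.mem_piFinset, biUnion_subset, neighborhood, image_subset_iff,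
    mem_univ, forall_const]
  refine forall_congr' fun x => ?_
  split_ifs with hx <;> simp [hx]

omit [DecidableEq β] in
theorem card_confined (X : Finset α) (Y : Finset β) :
    #(confined ι X Y) =
      (#Y ^ Fintype.card ι) ^ #X *
        (Fintype.card β ^ Fintype.card ι) ^ (Fintype.card α - #X) := by
  rw [confined, Fintype.card_piFinset, ← prod_mul_prod_compl X,
    prod_congr rfl fun x hx => congrArg card (if_pos hx),
    prod_congr rfl fun x hx => congrArg card (if_neg (mem_compl.1 hx))]
  simp [card_compl]

theorem exists_confined_of_card_biUnion_lt {f : α → ι → β} {X : Finset α}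
    (hX : #(X.biUnion (neighborhood f)) < #X) (hβ : #X ≤ Fintype.card β + 1) :
    ∃ Y : Finset β, #Y = #X - 1 ∧ f ∈ confined ι X Y := by
  obtain ⟨Y, hY, hYcard⟩ :=
    exists_superset_card_eq (s := X.biUnion (neighborhood f)) (n := #X - 1) (by omega) (by omega)
  exact ⟨Y, hYcard, mem_confined.2 hY⟩

theorem exists_hall_of_sum_lt (s : ℕ) (hs : s ≤ Fintype.card β + 1)
    (hsum : ∑ t ∈ Icc 1 s, (Fintype.card α).choose t * (Fintype.card β).choose (t - 1) *
        (((t - 1) ^ Fintype.card ι) ^ t *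
          (Fintype.card β ^ Fintype.card ι) ^ (Fintype.card α - t)) <
      (Fintype.card β ^ Fintype.card ι) ^ Fintype.card α) :
    ∃ f : α → ι → β, ∀ X : Finset α, #X ≤ s → #X ≤ #(X.biUnion (neighborhood f)) := by
  let bad : Finset (α → ι → β) := (Icc 1 s).biUnion fun t =>
    (powersetCard t univ ×ˢ powersetCard (t - 1) univ).biUnion fun p => confined ι p.1 p.2
  have hbad : #bad < #(univ : Finset (α → ι → β)) := by
    refine (card_biUnion_le.trans <| sum_le_sum fun t _ =>
      card_biUnion_le.trans_eq ?_).trans_lt (by simpa using hsum)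
    rw [sum_congr rfl fun p hp => by
      rw [card_confined, (mem_powersetCard.1 (mem_product.1 hp).1).2,
        (mem_powersetCard.1 (mem_product.1 hp).2).2]]
    simp [card_product, card_powersetCard]
  obtain ⟨f, -, hf⟩ := exists_mem_notMem_of_card_lt_card hbad
  refine ⟨f, fun X hXs => ?_⟩
  by_contra! hX
  obtain ⟨Y, hYcard, hfY⟩ := exists_confined_of_card_biUnion_lt hX (by omega)
  have hXY : (X, Y) ∈ powersetCard #X univ ×ˢ powersetCard (#X - 1) univ :=
    mem_product.2 ⟨mem_powersetCard_univ.2 rfl, mem_powersetCard_univ.2 hYcard⟩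
  exact hf <| mem_biUnion.2 ⟨#X, mem_Icc.2 ⟨by omega, hXs⟩, mem_biUnion.2 ⟨(X, Y), hXY, hfY⟩⟩

end Bipartite

section Estimates

variable {n k t : ℕ}

theorem two_pow_succ_mul_choose_mul_choose_le (hn : 2 ≤ n) (hk : k ≤ n) (ht₁ : 1 ≤ t)
    (ht : t ≤ 2 ^ k) :
    2 ^ (k + 1) * ((2 ^ n).choose t * (2 ^ k * n ^ 2).choose (t - 1) * (t - 1) ^ (n ^ 2 * t)) ≤
      (2 ^ k * n ^ 2) ^ (n ^ 2 * t) := by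
  obtain rfl | ht₂ := ht₁.eq_or_lt
  · simp [zero_pow (pow_ne_zero 2 (by omega : n ≠ 0))]
  have hpow (a : ℕ) : 2 ^ a ≤ n ^ a := Nat.pow_le_pow_left hn a
  have hchoose₁ : (2 ^ n).choose t ≤ n ^ (n * t) := by
    rw [pow_mul]
    exact (Nat.choose_le_pow _ _).trans (Nat.pow_le_pow_left (hpow n) t)
  have hchoose₂ : (2 ^ k * n ^ 2).choose (t - 1) ≤ n ^ ((n + 2) * t) := calc
    _ ≤ (2 ^ k * n ^ 2) ^ t :=
      (Nat.choose_le_pow _ _).trans (Nat.pow_le_pow_right (by positivity) (by omega))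
    _ ≤ (n ^ n * n ^ 2) ^ t :=
      Nat.pow_le_pow_left (Nat.mul_le_mul_right _ ((Nat.pow_le_pow_right (by omega) hk).trans
        (hpow n))) t
    _ = n ^ ((n + 2) * t) := by ring
  have hexp : n + 1 + n * t + (n + 2) * t ≤ 2 * (n ^ 2 * t) := by
    have : n + 2 ≤ n ^ 2 := by nlinarith
    nlinarith [Nat.mul_le_mul this ht₂]
  calc _ ≤ n ^ (n + 1) * (n ^ (n * t) * n ^ ((n + 2) * t) * (2 ^ k) ^ (n ^ 2 * t)) :=
        Nat.mul_le_mul ((Nat.pow_le_pow_right (by norm_num) (by omega)).trans (hpow _))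
          (Nat.mul_le_mul (Nat.mul_le_mul hchoose₁ hchoose₂) (Nat.pow_le_pow_left (by omega) _))
    _ = n ^ (n + 1 + n * t + (n + 2) * t) * (2 ^ k) ^ (n ^ 2 * t) := by ring
    _ ≤ n ^ (2 * (n ^ 2 * t)) * (2 ^ k) ^ (n ^ 2 * t) := by gcongr; omega
    _ = (2 ^ k * n ^ 2) ^ (n ^ 2 * t) := by ring

theorem two_pow_succ_mul_union_bound_term_le (hn : 2 ≤ n) (hk : k ≤ n) (ht₁ : 1 ≤ t)
    (ht : t ≤ 2 ^ k) :
    2 ^ (k + 1) * ((2 ^ n).choose t * (2 ^ k * n ^ 2).choose (t - 1) *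
        (((t - 1) ^ n ^ 2) ^ t * ((2 ^ k * n ^ 2) ^ n ^ 2) ^ (2 ^ n - t))) ≤
      ((2 ^ k * n ^ 2) ^ n ^ 2) ^ 2 ^ n := by
  have htn : t ≤ 2 ^ n := ht.trans (Nat.pow_le_pow_right (by norm_num) hk)
  calc _ = 2 ^ (k + 1) * ((2 ^ n).choose t * (2 ^ k * n ^ 2).choose (t - 1) *
          (t - 1) ^ (n ^ 2 * t)) * (2 ^ k * n ^ 2) ^ (n ^ 2 * (2 ^ n - t)) := by
        rw [← pow_mul, ← pow_mul]; ring
    _ ≤ (2 ^ k * n ^ 2) ^ (n ^ 2 * t) * (2 ^ k * n ^ 2) ^ (n ^ 2 * (2 ^ n - t)) :=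
        Nat.mul_le_mul_right _ (two_pow_succ_mul_choose_mul_choose_le hn hk ht₁ ht)
    _ = ((2 ^ k * n ^ 2) ^ n ^ 2) ^ 2 ^ n := by
        rw [← pow_add, ← mul_add, Nat.add_sub_cancel' htn, pow_mul]

theorem union_bound_lt (hn : 2 ≤ n) (hk : k ≤ n) :
    ∑ t ∈ Icc 1 (2 ^ k), (2 ^ n).choose t * (2 ^ k * n ^ 2).choose (t - 1) *
        (((t - 1) ^ n ^ 2) ^ t * ((2 ^ k * n ^ 2) ^ n ^ 2) ^ (2 ^ n - t)) <
      ((2 ^ k * n ^ 2) ^ n ^ 2) ^ 2 ^ n := by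
  set total := ((2 ^ k * n ^ 2) ^ n ^ 2) ^ 2 ^ n
  rw [← Nat.mul_lt_mul_left (pow_pos two_pos (k + 1)), mul_sum]
  calc _ ≤ ∑ _t ∈ Icc 1 (2 ^ k), total := sum_le_sum fun t ht =>
        two_pow_succ_mul_union_bound_term_le hn hk (mem_Icc.1 ht).1 (mem_Icc.1 ht).2
    _ = 2 ^ k * total := by simp
    _ < 2 ^ (k + 1) * total := by
        have htotal : 0 < total := by positivity
        rw [pow_succ, mul_assoc]
        gcongr
        omega

end Estimates

end OfflineMatching

open OfflineMatching

/-- Off-line version of (OM) with the explicit constant `c = 2`: for all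
`n ≥ 2` and `k ≤ n` there is a bipartite graph with left part of size `2^n`,
right part of size `2^k · n²`, each left vertex having at most `n²`
neighbors, such that every set `X` of at most `2^k` left vertices has at
least `#X` neighbors. -/
theorem offline_matchings_exist_c_two :
    ∀ n k : ℕ, 2 ≤ n → k ≤ n →
      ∃ N : Fin (2 ^ n) → Finset (Fin (2 ^ k * n ^ 2)),
        (∀ x, (N x).card ≤ n ^ 2) ∧
        ∀ X : Finset (Fin (2 ^ n)), X.card ≤ 2 ^ k →
          X.card ≤ (X.biUnion N).card := by
  intro n k hn hk
  obtain ⟨f, hf⟩ := exists_hall_of_sum_lt (α := Fin (2 ^ n)) (β := Fin (2 ^ k * n ^ 2))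
    (ι := Fin (n ^ 2)) (2 ^ k)
    (by simpa using Nat.le_succ_of_le (Nat.le_mul_of_pos_right _ (by positivity)))
    (by simpa using union_bound_lt hn hk)
  exact ⟨neighborhood f, fun x => (card_neighborhood_le f x).trans_eq (Fintype.card_fin _), hf⟩
end

section
/- Let a bipartite graph with left part L, right part R, and neighborhood map N : L → Finset R satisfy: every subset X ⊆ L with #X ≤ s has #N(X) ≥ #X. Process any sequence of at most s pairwise distinct elements of L one at a time by the greedy strategy: maintain the set U of already used right vertices (initially empty); when an element x arrives, if N(x) ⊄ U then match x to some element of N(x) \ U and add it to U (x is served), and otherwise x is rejected. Then at the end of the sequence the number of rejected elements is at most the number of served elements; in particular, at most half of the processed elements are rejected. -/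
/-- One step of the greedy on-line matching strategy.  The state is a triple
`(U, rej, srv)` where `U` is the set of already used right vertices, `rej`
the number of rejected elements and `srv` the number of served elements.
When `x` arrives, if `N x ⊄ U` then `x` is matched to a chosen element of
`N x \ U` (which is added to `U`) and served; otherwise `x` is rejected. -/
def greedyStep {L R : Type*} [DecidableEq R] (N : L → Finset R)
    (choose : ∀ t : Finset R, t.Nonempty → R)
    (st : Finset R × ℕ × ℕ) (x : L) : Finset R × ℕ × ℕ :=
  if h : (N x \ st.1).Nonempty then
    (insert (choose (N x \ st.1) h) st.1, st.2.1, st.2.2 + 1)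
  else
    (st.1, st.2.1 + 1, st.2.2)

/-- The result of processing a list of left vertices (in order) by the greedy
strategy, starting from the empty used set and zero counters. -/
def greedyRun {L R : Type*} [DecidableEq R] (N : L → Finset R)
    (choose : ∀ t : Finset R, t.Nonempty → R) (l : List L) : Finset R × ℕ × ℕ :=
  l.foldl (greedyStep N choose) (∅, 0, 0)

/-
A rejected element `x` has all of `N x` used at the time it arrives, and the used set only
grows, so the rejected elements `X` satisfy `N(X) ⊆ U`.  Each served element adds one new
vertex to `U`, so `#X ≤ #N(X) ≤ #U = srv` by Hall's condition, applied to a set of at most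
`#l ≤ s` elements.
-/

namespace Greedy

variable {L R : Type*} [DecidableEq R] (N : L → Finset R) (choose : ∀ t : Finset R, t.Nonempty → R)

theorem greedyStep_of_nonempty {st : Finset R × ℕ × ℕ} {x : L} (h : (N x \ st.1).Nonempty) :
    greedyStep N choose st x = (insert (choose (N x \ st.1) h) st.1, st.2.1, st.2.2 + 1) :=
  dif_pos h

theorem greedyStep_of_sdiff_eq_empty {st : Finset R × ℕ × ℕ} {x : L} (h : N x \ st.1 = ∅) :
    greedyStep N choose st x = (st.1, st.2.1 + 1, st.2.2) :=
  dif_neg (Finset.not_nonempty_iff_eq_empty.mpr h)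

theorem greedyRun_append_singleton (l : List L) (x : L) :
    greedyRun N choose (l ++ [x]) = greedyStep N choose (greedyRun N choose l) x := by
  simp [greedyRun, List.foldl_append]

theorem greedyRun_rejected_add_served (l : List L) :
    (greedyRun N choose l).2.1 + (greedyRun N choose l).2.2 = l.length := by
  induction l using List.reverseRecOn with
  | nil => rfl
  | append_singleton l x ih =>
    rw [greedyRun_append_singleton, List.length_append, List.length_singleton]
    rcases (N x \ (greedyRun N choose l).1).eq_empty_or_nonempty with h | h
    · rw [greedyStep_of_sdiff_eq_empty N choose h]
      dsimp only
      omega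
    · rw [greedyStep_of_nonempty N choose h]
      exact congrArg (· + 1) ih

theorem card_greedyRun_used (hchoose : ∀ (t : Finset R) (ht : t.Nonempty), choose t ht ∈ t)
    (l : List L) : (greedyRun N choose l).1.card = (greedyRun N choose l).2.2 := by
  induction l using List.reverseRecOn with
  | nil => rfl
  | append_singleton l x ih =>
    rw [greedyRun_append_singleton]
    rcases (N x \ (greedyRun N choose l).1).eq_empty_or_nonempty with h | h
    · rw [greedyStep_of_sdiff_eq_empty N choose h]
      exact ih
    · have hnew := (Finset.mem_sdiff.mp (hchoose _ h)).2
      rw [greedyStep_of_nonempty N choose h, Finset.card_insert_of_notMem hnew, ih]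

theorem exists_rejected_neighbors_subset_used [DecidableEq L] (l : List L) (hnd : l.Nodup) :
    ∃ X : Finset L, X ⊆ l.toFinset ∧ X.card = (greedyRun N choose l).2.1 ∧
      X.biUnion N ⊆ (greedyRun N choose l).1 := by
  induction l using List.reverseRecOn with
  | nil => exact ⟨∅, by simp [greedyRun]⟩
  | append_singleton l x ih =>
    obtain ⟨hnd, -, hxl⟩ := List.nodup_append.mp hnd
    obtain ⟨X, hXl, hXcard, hXN⟩ := ih hnd
    have hXl' : X ⊆ (l ++ [x]).toFinset := hXl.trans (by simp)
    rw [greedyRun_append_singleton]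
    rcases (N x \ (greedyRun N choose l).1).eq_empty_or_nonempty with h | h
    · have hNx := Finset.sdiff_eq_empty_iff_subset.mp h
      have hxX : x ∉ X := fun hx => hxl x (List.mem_toFinset.mp (hXl hx)) x (by simp) rfl
      rw [greedyStep_of_sdiff_eq_empty N choose h]
      refine ⟨insert x X, Finset.insert_subset (by simp) hXl', ?_, ?_⟩
      · rw [Finset.card_insert_of_notMem hxX, hXcard]
      · rw [Finset.biUnion_insert]
        exact Finset.union_subset hNx hXN
    · rw [greedyStep_of_nonempty N choose h]
      exact ⟨X, hXl', hXcard, hXN.trans (Finset.subset_insert _ _)⟩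

end Greedy

open Greedy in
/-- If every set `X` of at most `s` left vertices satisfies `#N(X) ≥ #X`,
then after greedily processing any sequence of at most `s` pairwise distinct
left vertices, the number of rejected elements is at most the number of
served elements; in particular at most half of the processed elements are
rejected. -/
theorem greedy_rejects_at_most_half {L R : Type*} [DecidableEq R]
    (N : L → Finset R) (s : ℕ)
    (hall : ∀ X : Finset L, X.card ≤ s → X.card ≤ (X.biUnion N).card)
    (choose : ∀ t : Finset R, t.Nonempty → R)
    (hchoose : ∀ (t : Finset R) (ht : t.Nonempty), choose t ht ∈ t)
    (l : List L) (hnd : l.Nodup) (hlen : l.length ≤ s) :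
    (greedyRun N choose l).2.1 ≤ (greedyRun N choose l).2.2 ∧
      2 * (greedyRun N choose l).2.1 ≤ l.length := by
  classical
  obtain ⟨X, -, hXcard, hXN⟩ := exists_rejected_neighbors_subset_used N choose l hnd
  have hsum := greedyRun_rejected_add_served N choose l
  have hle : (greedyRun N choose l).2.1 ≤ (greedyRun N choose l).2.2 :=
    calc (greedyRun N choose l).2.1 = X.card := hXcard.symm
      _ ≤ (X.biUnion N).card := hall X (by omega)
      _ ≤ (greedyRun N choose l).1.card := Finset.card_le_card hXN
      _ = (greedyRun N choose l).2.2 := card_greedyRun_used N choose hchoose l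
  exact ⟨hle, by omega⟩
end

section
/- For all integers K, N, M and real ε with 1 < K ≤ N, M > 0 and ε > 0, there exists a (K, ε)-extractor E : Fin N × Fin D → Fin M with left degree D = ⌈max{ (M/K)·(ln 2)/ε², (1/ε²)·(ln(N/K) + 1) }⌉. -/
open Finset

/-- `edgeCount E S Y` is the number of edges between `S` and `Y` in the
bipartite multigraph given by `E : Fin N × Fin D → Fin M`, i.e. the number of
pairs `(x, i)` with `x ∈ S` and `E (x, i) ∈ Y`. -/
def edgeCount {N D M : ℕ} (E : Fin N × Fin D → Fin M)
    (S : Finset (Fin N)) (Y : Finset (Fin M)) : ℕ :=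
  ((S ×ˢ (univ : Finset (Fin D))).filter (fun p => E p ∈ Y)).card

/-- `E` is a `(K, ε)`-extractor: for every set `S` of at least `K` left
vertices and every set `Y` of right vertices,
`|#E(S,Y)/(D·#S) − #Y/M| < ε`. -/
def IsExtractor {N D M : ℕ} (E : Fin N × Fin D → Fin M) (K : ℕ) (ε : ℝ) : Prop :=
  ∀ (S : Finset (Fin N)) (Y : Finset (Fin M)), K ≤ S.card →
    |(edgeCount E S Y : ℝ) / (D * S.card) - (Y.card : ℝ) / M| < ε

/-!
A uniformly random `E` works. For fixed `A = S × Fin D` and `Y`, the `#A` events `E a ∈ Y`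
are independent with probability `p = #Y / M`, so by Hoeffding's lemma and Markov's
inequality the fraction of `a ∈ A` with `E a ∈ Y` exceeds `p + ε` with probability at most
`exp (-2 ε² #A)`. A deviation below `p - ε` is a deviation above for `Yᶜ`, so a union bound
over the `C(N, K) · 2^M` pairs `(S, Y)` with `#S = K` succeeds once
`2 ε² K D ≥ K (log (N / K) + 1) + M log 2`, which the choice of `D` guarantees, using
`C(N, K) < (e N / K)^K`. Sets `S` larger than `K` are handled by averaging over their
`K`-subsets.
-/

open Real

open MeasureTheory ProbabilityTheory in
theorem one_sub_add_mul_exp_le {p : ℝ} (hp0 : 0 ≤ p) (hp1 : p ≤ 1) (t : ℝ) :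
    1 - p + p * exp t ≤ exp (t * p + t ^ 2 / 8) := by
  let μ : Measure ℝ := bernoulliMeasure 1 0 ⟨p, hp0, hp1⟩
  have hsupp : ∀ᵐ x ∂μ, x ∈ Set.Icc (0 : ℝ) 1 := by
    rw [ae_iff]
    exact bernoulliMeasure_apply_of_notMem_of_notMem _ measurableSet_Icc.compl (by simp) (by simp)
  have hoeffding := (hasSubgaussianMGF_of_mem_Icc measurable_id.aemeasurable hsupp).mgf_le t
  norm_num [mgf, μ, integral_bernoulliMeasure] at hoeffding
  calc 1 - p + p * exp t
      = (p * exp (t * (1 - p)) + (1 - p) * exp (-(t * p))) * exp (t * p) := by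
        rw [add_mul, mul_assoc, mul_assoc, ← exp_add, ← exp_add, neg_add_cancel, exp_zero,
          ← mul_add, sub_add_cancel, mul_one]
        ring
    _ ≤ exp (1 / 4 * t ^ 2 / 2) * exp (t * p) := by gcongr
    _ = exp (t * p + t ^ 2 / 8) := by rw [← exp_add]; ring_nf

theorem choose_lt_exp {N K : ℕ} (hK : 2 ≤ K) (hKN : K ≤ N) :
    (N.choose K : ℝ) < exp (K * (log (N / K) + 1)) := by
  have hK0 : (0 : ℝ) < K := by positivity
  have hNK : (0 : ℝ) < N / K := div_pos (by norm_cast; omega) hK0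
  calc (N.choose K : ℝ) < (N ^ K : ℝ) / K.factorial := Nat.choose_lt_pow_div (by omega) hK
    _ = (N / K : ℝ) ^ K * ((K : ℝ) ^ K / K.factorial) := by rw [div_pow]; field_simp
    _ ≤ (N / K : ℝ) ^ K * exp K := by gcongr; exact pow_div_factorial_le_exp _ hK0.le K
    _ = exp (K * (log (N / K) + 1)) := by
      rw [mul_add, mul_one, exp_add, ← exp_log hNK, ← exp_nat_mul, log_exp]

theorem choose_mul_two_pow_mul_exp_lt_one {N K M : ℕ} {x : ℝ} (hK : 2 ≤ K) (hKN : K ≤ N)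
    (hxM : M * log 2 ≤ x) (hxN : K * (log (N / K) + 1) ≤ x) :
    N.choose K * 2 ^ M * exp (-2 * x) < 1 := by
  calc N.choose K * 2 ^ M * exp (-2 * x)
      < exp (K * (log (N / K) + 1)) * exp (M * log 2) * exp (-2 * x) := by
        rw [exp_nat_mul (log 2), exp_log two_pos]
        gcongr
        exact choose_lt_exp hK hKN
    _ ≤ exp 0 := by
        rw [← exp_add, ← exp_add]
        gcongr
        linarith
    _ = 1 := exp_zero

theorem sum_powersetCard_sum {α M : Type*} [DecidableEq α] [AddCommMonoid M] (S : Finset α)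
    {k : ℕ} (hk : k ≠ 0) (g : α → M) :
    ∑ T ∈ S.powersetCard k, ∑ x ∈ T, g x = (#S - 1).choose (k - 1) • ∑ x ∈ S, g x := by
  rw [sum_comm' (t' := S) (s' := fun x ↦ {T ∈ S.powersetCard k | x ∈ T}), smul_sum]
  · refine sum_congr rfl fun x hx ↦ ?_
    have := card_filter_powersetCard_subset {x} S k (by simpa using hx)
      (by simpa using Nat.one_le_iff_ne_zero.2 hk)
    simp_all
  · intro T x
    simp only [mem_powersetCard, mem_filter]
    exact ⟨fun h ↦ ⟨h, h.1.1 h.2⟩, And.left⟩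

theorem abs_sum_div_card_lt_of_forall_powersetCard {α : Type*} [DecidableEq α] {S : Finset α}
    {k : ℕ} (hk : 0 < k) (hkS : k ≤ #S) {g : α → ℝ} {c : ℝ}
    (h : ∀ T ∈ S.powersetCard k, |(∑ x ∈ T, g x) / k| < c) :
    |(∑ x ∈ S, g x) / #S| < c := by
  set m := (#S - 1).choose (k - 1)
  have hm : (0 : ℝ) < m := by exact_mod_cast Nat.choose_pos (by omega)
  have hS : (0 : ℝ) < #S := by exact_mod_cast hk.trans_le hkS
  have hcount : (#S).choose k * k = #S * m := by
    obtain ⟨s, hs⟩ : ∃ s, #S = s + 1 := ⟨#S - 1, by omega⟩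
    obtain ⟨j, rfl⟩ : ∃ j, k = j + 1 := ⟨k - 1, by omega⟩
    simp only [m, hs, Nat.add_sub_cancel]
    exact (Nat.add_one_mul_choose_eq s j).symm
  have key : m * |∑ x ∈ S, g x| < m * (#S * c) :=
    calc m * |∑ x ∈ S, g x| = |∑ T ∈ S.powersetCard k, ∑ x ∈ T, g x| := by
          rw [sum_powersetCard_sum S hk.ne', nsmul_eq_mul, abs_mul, Nat.abs_cast]
      _ ≤ ∑ T ∈ S.powersetCard k, |∑ x ∈ T, g x| := abs_sum_le_sum_abs _ _
      _ < ∑ T ∈ S.powersetCard k, k * c := by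
          refine sum_lt_sum_of_nonempty (powersetCard_nonempty.2 hkS) fun T hT ↦ ?_
          have := h T hT
          rwa [abs_div, Nat.abs_cast, div_lt_iff₀' (by positivity)] at this
      _ = m * (#S * c) := by
          rw [sum_const, card_powersetCard, nsmul_eq_mul, ← mul_assoc, ← Nat.cast_mul, hcount]
          push_cast; ring
  rw [abs_div, Nat.abs_cast, div_lt_iff₀' hS]
  exact lt_of_mul_lt_mul_left key hm.le

variable {α β : Type*} [Fintype β] [DecidableEq β]

noncomputable def discrepancy (E : α → β) (A : Finset α) (Y : Finset β) : ℝ :=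
  #{a ∈ A | E a ∈ Y} / #A - #Y / Fintype.card β

theorem discrepancy_compl [Nonempty β] (E : α → β) {A : Finset α} (hA : A.Nonempty)
    (Y : Finset β) : discrepancy E A Yᶜ = -discrepancy E A Y := by
  have hA' : (#A : ℝ) ≠ 0 := by exact_mod_cast hA.card_pos.ne'
  have hβ : (Fintype.card β : ℝ) ≠ 0 := by simp
  have hcount : #{a ∈ A | E a ∈ Yᶜ} + #{a ∈ A | E a ∈ Y} = #A := by
    simpa only [mem_compl, not_not] using
      card_filter_add_card_filter_not (s := A) (fun a ↦ E a ∉ Y)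
  have hcount' : (#{a ∈ A | E a ∈ Yᶜ} : ℝ) = #A - #{a ∈ A | E a ∈ Y} := by
    rw [← hcount]; push_cast; ring
  rw [discrepancy, discrepancy, hcount', card_compl, Nat.cast_sub (card_le_univ Y)]
  field_simp
  ring

theorem discrepancy_product_univ {ι : Type*} [Fintype ι] (E : α × ι → β)
    {S : Finset α} (hS : S.Nonempty) (Y : Finset β) :
    discrepancy E (S ×ˢ univ) Y = (∑ x ∈ S, discrepancy (fun i ↦ E (x, i)) univ Y) / #S := by
  have hS' : (#S : ℝ) ≠ 0 := by exact_mod_cast hS.card_pos.ne'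
  have hrows : #{a ∈ S ×ˢ univ | E a ∈ Y} = ∑ x ∈ S, #{i | E (x, i) ∈ Y} := by
    rw [card_filter, sum_product]
    simp only [card_filter]
  simp only [discrepancy, hrows, card_product, card_univ, sum_sub_distrib, sum_const,
    nsmul_eq_mul, ← sum_div]
  push_cast
  field_simp

section RandomFunction

variable [Fintype α] [DecidableEq α]

theorem sum_exp_mul_card_filter (A : Finset α) (Y : Finset β) (t : ℝ) :
    ∑ E : α → β, exp (t * #{a ∈ A | E a ∈ Y})
      = (#Yᶜ + #Y * exp t) ^ #A * Fintype.card β ^ #Aᶜ := by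
  set w : α → β → ℝ := fun a b ↦ if a ∈ A then (if b ∈ Y then exp t else 1) else 1
  have hprod (E : α → β) : exp (t * #{a ∈ A | E a ∈ Y}) = ∏ a, w a (E a) := by
    rw [prod_ite_mem, univ_inter, prod_ite, prod_const_one, mul_one, prod_const, mul_comm,
      exp_nat_mul]
  have hsum (a : α) : ∑ b, w a b = if a ∈ A then #Yᶜ + #Y * exp t else (Fintype.card β : ℝ) := by
    split_ifs with ha
    · simp [w, ha, sum_ite, filter_not, ← compl_eq_univ_sdiff, add_comm]
    · simp [w, ha]
  rw [sum_congr rfl fun E _ ↦ hprod E, ← Fintype.prod_sum w]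
  simp [hsum, prod_ite, filter_not, ← compl_eq_univ_sdiff]

theorem sum_exp_mul_card_filter_le [Nonempty β] (A : Finset α) (Y : Finset β) (t : ℝ) :
    ∑ E : α → β, exp (t * #{a ∈ A | E a ∈ Y})
      ≤ exp (#A * (t * (#Y / Fintype.card β) + t ^ 2 / 8)) * Fintype.card β ^ Fintype.card α := by
  have hβ : (0 : ℝ) < Fintype.card β := by simp [Fintype.card_pos]
  set p : ℝ := #Y / Fintype.card β with hp
  have hp0 : 0 ≤ p := by positivity
  have hp1 : p ≤ 1 := div_le_one_of_le₀ (by simpa using card_le_univ Y) hβ.le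
  have hbase : (#Yᶜ + #Y * exp t : ℝ) = Fintype.card β * (1 - p + p * exp t) := by
    rw [card_compl, Nat.cast_sub (card_le_univ Y), hp]
    field_simp
  calc ∑ E : α → β, exp (t * #{a ∈ A | E a ∈ Y})
      = (1 - p + p * exp t) ^ #A * (Fintype.card β : ℝ) ^ (#A + #Aᶜ) := by
        rw [sum_exp_mul_card_filter, hbase, mul_pow, pow_add]; ring
    _ ≤ exp (t * p + t ^ 2 / 8) ^ #A * (Fintype.card β : ℝ) ^ (#A + #Aᶜ) := by
        gcongr
        exact one_sub_add_mul_exp_le hp0 hp1 t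
    _ = _ := by rw [card_add_card_compl, exp_nat_mul]

theorem card_filter_le_discrepancy_le [Nonempty β] {A : Finset α} (hA : A.Nonempty)
    (Y : Finset β) {ε : ℝ} (hε : 0 ≤ ε) :
    (#{E : α → β | ε ≤ discrepancy E A Y} : ℝ)
      ≤ exp (-2 * ε ^ 2 * #A) * Fintype.card β ^ Fintype.card α := by
  set p : ℝ := #Y / Fintype.card β
  have hA' : (0 : ℝ) < #A := by exact_mod_cast hA.card_pos
  have htail : ∀ E ∈ ({E : α → β | ε ≤ discrepancy E A Y} : Finset _),
      exp (4 * ε * (#A * (p + ε))) ≤ exp (4 * ε * #{a ∈ A | E a ∈ Y}) := by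
    intro E hE
    have hE : ε ≤ #{a ∈ A | E a ∈ Y} / #A - p := (mem_filter.1 hE).2
    gcongr
    rw [le_sub_iff_add_le, le_div_iff₀' hA'] at hE
    linarith
  have markov := (card_nsmul_le_sum _ _ _ htail).trans <|
    (sum_le_sum_of_subset_of_nonneg (subset_univ _) fun _ _ _ ↦ (exp_pos _).le).trans
      (sum_exp_mul_card_filter_le A Y (4 * ε))
  rw [nsmul_eq_mul, ← le_div_iff₀ (exp_pos _)] at markov
  refine markov.trans_eq ?_
  rw [mul_div_right_comm, ← exp_sub]
  congr 2
  ring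

theorem exists_forall_abs_discrepancy_lt [Nonempty β] {ι : Type*} (I : Finset ι)
    (A : ι → Finset α) {n : ℕ} (hn : 0 < n) (hA : ∀ i ∈ I, #(A i) = n) {ε : ℝ} (hε : 0 ≤ ε)
    (hI : #I * 2 ^ Fintype.card β * exp (-2 * ε ^ 2 * n) < 1) :
    ∃ E : α → β, ∀ i ∈ I, ∀ Y, |discrepancy E (A i) Y| < ε := by
  have hAne : ∀ i ∈ I, (A i).Nonempty := fun i hi ↦ card_pos.1 (hA i hi ▸ hn)
  set bad := (I ×ˢ (univ : Finset (Finset β))).biUnion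
    fun iY ↦ ({E : α → β | ε ≤ discrepancy E (A iY.1) iY.2} : Finset _)
  have hbad : (#bad : ℝ) < #(univ : Finset (α → β)) := by
    calc (#bad : ℝ)
        ≤ ∑ iY ∈ I ×ˢ (univ : Finset (Finset β)),
            (#{E : α → β | ε ≤ discrepancy E (A iY.1) iY.2} : ℝ) := by
          exact_mod_cast card_biUnion_le
      _ ≤ ∑ iY ∈ I ×ˢ (univ : Finset (Finset β)),
            exp (-2 * ε ^ 2 * n) * (Fintype.card β : ℝ) ^ Fintype.card α := by
          refine sum_le_sum fun iY hiY ↦ ?_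
          have hi := (mem_product.1 hiY).1
          simpa only [hA _ hi] using card_filter_le_discrepancy_le (hAne _ hi) iY.2 hε
      _ < #(univ : Finset (α → β)) := by
          rw [sum_const, nsmul_eq_mul, card_product, card_univ, card_univ, Fintype.card_finset,
            Fintype.card_fun]
          push_cast
          rw [← mul_assoc]
          exact mul_lt_of_lt_one_left (by simp [Fintype.card_pos]) hI
  obtain ⟨E, -, hE⟩ := exists_mem_notMem_of_card_lt_card (by exact_mod_cast hbad)
  refine ⟨E, fun i hi Y ↦ ?_⟩
  by_contra! hdev
  rcases le_abs'.1 hdev with hneg | hpos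
  · refine hE (mem_biUnion.2 ⟨(i, Yᶜ), mem_product.2 ⟨hi, mem_univ _⟩,
      mem_filter.2 ⟨mem_univ _, ?_⟩⟩)
    rw [discrepancy_compl E (hAne i hi)]
    linarith
  · exact hE (mem_biUnion.2 ⟨(i, Y), mem_product.2 ⟨hi, mem_univ _⟩,
      mem_filter.2 ⟨mem_univ _, hpos⟩⟩)

end RandomFunction

theorem edgeCount_div_sub_eq_discrepancy {N D M : ℕ} (E : Fin N × Fin D → Fin M)
    (S : Finset (Fin N)) (Y : Finset (Fin M)) :
    (edgeCount E S Y : ℝ) / (D * #S) - #Y / M = discrepancy E (S ×ˢ univ) Y := by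
  simp [discrepancy, edgeCount, mul_comm]

theorem isExtractor_of_forall_card_eq {N D M K : ℕ} {ε : ℝ} (E : Fin N × Fin D → Fin M)
    (hK : 0 < K) (h : ∀ S : Finset (Fin N), #S = K → ∀ Y, |discrepancy E (S ×ˢ univ) Y| < ε) :
    IsExtractor E K ε := by
  intro S Y hKS
  rw [edgeCount_div_sub_eq_discrepancy,
    discrepancy_product_univ E (card_pos.1 (hK.trans_le hKS))]
  refine abs_sum_div_card_lt_of_forall_powersetCard hK hKS fun T hT ↦ ?_
  obtain ⟨-, hTK⟩ := mem_powersetCard.1 hT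
  rw [← hTK, ← discrepancy_product_univ E (card_pos.1 (hTK ▸ hK))]
  exact h T hTK Y

/-- For all `K, N, M, ε` with `1 < K ≤ N`, `M > 0`, `ε > 0`, there exists a
`(K, ε)`-extractor with left degree
`D = ⌈max{(M/K)·ln 2/ε², (1/ε²)(ln(N/K) + 1)}⌉`. -/
theorem extractor_exists (K N M : ℕ) (ε : ℝ)
    (hK : 1 < K) (hKN : K ≤ N) (hM : 0 < M) (hε : 0 < ε) :
    ∃ E : Fin N ×
        Fin (⌈max (((M : ℝ) / K) * Real.log 2 / ε ^ 2)
              ((1 / ε ^ 2) * (Real.log ((N : ℝ) / K) + 1))⌉₊) → Fin M,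
      IsExtractor E K ε := by
  set D := ⌈max (((M : ℝ) / K) * Real.log 2 / ε ^ 2)
    ((1 / ε ^ 2) * (Real.log ((N : ℝ) / K) + 1))⌉₊
  have hK0 : (0 : ℝ) < K := by positivity
  have hlog : 0 ≤ log (N / K) := log_nonneg ((one_le_div hK0).2 (by exact_mod_cast hKN))
  have hDM : M * log 2 ≤ ε ^ 2 * (K * D) := by
    have : (M : ℝ) / K * log 2 / ε ^ 2 ≤ D := (le_max_left _ _).trans (Nat.le_ceil _)
    rw [div_le_iff₀ (by positivity), div_mul_eq_mul_div, div_le_iff₀ hK0] at this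
    linarith
  have hDN : K * (log (N / K) + 1) ≤ ε ^ 2 * (K * D) := by
    have : 1 / ε ^ 2 * (log (N / K) + 1) ≤ D := (le_max_right _ _).trans (Nat.le_ceil _)
    rw [one_div_mul_eq_div, div_le_iff₀ (by positivity)] at this
    nlinarith
  have hD : 0 < D := Nat.ceil_pos.2 <|
    (by positivity : 0 < 1 / ε ^ 2 * (log (N / K) + 1)).trans_le (le_max_right _ _)
  have hunion : (#(powersetCard K (univ : Finset (Fin N))) : ℝ) * 2 ^ Fintype.card (Fin M)
      * exp (-2 * ε ^ 2 * (K * D : ℕ)) < 1 := by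
    rw [card_powersetCard, card_univ, Fintype.card_fin, Fintype.card_fin, Nat.cast_mul]
    simpa only [mul_assoc] using choose_mul_two_pow_mul_exp_lt_one hK hKN hDM hDN
  have : NeZero M := ⟨hM.ne'⟩
  obtain ⟨E, hE⟩ := exists_forall_abs_discrepancy_lt (α := Fin N × Fin D) _ (· ×ˢ univ)
    (Nat.mul_pos (by omega) hD) (by simp +contextual) hε.le hunion
  exact ⟨E, isExtractor_of_forall_card_eq E (by omega) fun S hS ↦
    hE S (mem_powersetCard_univ.2 hS)⟩
end

section
/- Let E : Fin N × Fin D → Fin M be a (K, ε)-extractor with K an integer, 0 < K ≤ N. Then for every probability distribution P on the left part Fin N with min-entropy at least log₂ K (i.e., P(x) ≤ 1/K for every x) and every set Y of right vertices, | Σ_x P(x) · (#{i ∈ Fin D : E(x,i) ∈ Y}/D) − #Y/M | ≤ ε; that is, the probability that a random edge label applied to a P-random left vertex lands in Y is ε-close to #Y/M. -/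
/-! A distribution with `P x ≤ 1/K` is dominated by the flat distributions on `K`-sets: if `S`
collects `K` largest values of `f` and `t = min_S f`, then `f - t` is nonnegative on `S` and
nonpositive off `S`, so `∑ P f - t = ∑ P (f - t) ≤ (1/K) ∑_S (f - t)`, i.e. the `P`-average of `f`
is at most its average over `S`. Applied to `f` and `-f`, with `f x` the fraction of edges from `x`
into `Y`, this squeezes the `P`-average between two `K`-set averages, each `ε`-close to `#Y/M`. -/

open Finset

theorem exists_card_eq_separated_by_threshold {α β : Type*} [Fintype α] [AddCommGroup β]
    [LinearOrder β] [IsOrderedAddMonoid β] (f : α → β) {K : ℕ} (hK : 0 < K)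
    (hKα : K ≤ Fintype.card α) :
    ∃ S : Finset α, #S = K ∧ ∃ t, (∀ x ∈ S, t ≤ f x) ∧ ∀ x ∉ S, f x ≤ t := by
  classical
  obtain ⟨S, hS, hSmax⟩ := exists_max_image (univ.powersetCard K) (fun S => ∑ x ∈ S, f x)
    (powersetCard_nonempty.mpr (by simpa using hKα))
  have hSK : #S = K := (mem_powersetCard.mp hS).2
  obtain ⟨y, hy, hymin⟩ := exists_min_image S f (card_pos.mp (hSK ▸ hK))
  refine ⟨S, hSK, f y, hymin, fun x hx => ?_⟩
  -- otherwise exchanging `y` for `x` would increase the sum over `S`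
  by_contra! hlt
  have hx' : x ∉ S.erase y := fun h => hx (mem_of_mem_erase h)
  have hmem : insert x (S.erase y) ∈ univ.powersetCard K := by
    rw [mem_powersetCard, card_insert_of_notMem hx', card_erase_of_mem hy, hSK]
    exact ⟨subset_univ _, by omega⟩
  have := hSmax _ hmem
  rw [sum_insert hx', sum_erase_eq_sub hy] at this
  exact this.not_gt (by simpa using add_lt_add_left hlt (∑ x ∈ S, f x - f y))

theorem exists_card_eq_weighted_sum_le_average {α : Type*} [Fintype α] (f P : α → ℝ) {K : ℕ}
    (hP0 : ∀ x, 0 ≤ P x) (hP1 : ∑ x, P x = 1) (hPK : ∀ x, P x ≤ 1 / K) :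
    ∃ S : Finset α, #S = K ∧ ∑ x, P x * f x ≤ (∑ x ∈ S, f x) / K := by
  classical
  -- `1 / 0 = 0`, so `K = 0` would force `P = 0`
  have hK : 0 < K := by
    by_contra! h
    obtain rfl : K = 0 := by omega
    have : ∑ x, P x ≤ 0 := sum_nonpos fun x _ => by simpa using hPK x
    linarith
  have hKpos : (0 : ℝ) < K := by exact_mod_cast hK
  have hKα : K ≤ Fintype.card α := by
    have : ∑ x, P x ≤ Fintype.card α * (1 / K) := by
      simpa using sum_le_card_nsmul univ P _ fun x _ => hPK x
    rw [hP1, mul_one_div, one_le_div hKpos] at this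
    exact_mod_cast this
  obtain ⟨S, hSK, t, hin, hout⟩ := exists_card_eq_separated_by_threshold f hK hKα
  refine ⟨S, hSK, ?_⟩
  have hinside : ∑ x ∈ S, P x * (f x - t) ≤ ∑ x ∈ S, (f x - t) / K :=
    sum_le_sum fun x hx => by
      rw [div_eq_mul_one_div, mul_comm (f x - t)]
      exact mul_le_mul_of_nonneg_right (hPK x) (sub_nonneg.mpr (hin x hx))
  have houtside : ∑ x ∈ Sᶜ, P x * (f x - t) ≤ 0 :=
    sum_nonpos fun x hx =>
      mul_nonpos_of_nonneg_of_nonpos (hP0 x) (sub_nonpos.mpr (hout x (mem_compl.mp hx)))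
  have hshift : ∑ x, P x * f x = ∑ x, P x * (f x - t) + t := by
    simp only [mul_sub, sum_sub_distrib, ← sum_mul, hP1, one_mul, sub_add_cancel]
  have hS : ∑ x ∈ S, (f x - t) / K = (∑ x ∈ S, f x) / K - t := by
    rw [← sum_div, sum_sub_distrib, sum_const, hSK, nsmul_eq_mul]
    field_simp
  rw [hshift, ← sum_add_sum_compl S]
  linarith

theorem exists_card_eq_average_le_weighted_sum {α : Type*} [Fintype α] (f P : α → ℝ) {K : ℕ}
    (hP0 : ∀ x, 0 ≤ P x) (hP1 : ∑ x, P x = 1) (hPK : ∀ x, P x ≤ 1 / K) :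
    ∃ S : Finset α, #S = K ∧ (∑ x ∈ S, f x) / K ≤ ∑ x, P x * f x := by
  obtain ⟨S, hSK, hle⟩ := exists_card_eq_weighted_sum_le_average (-f) P hP0 hP1 hPK
  refine ⟨S, hSK, ?_⟩
  simp only [Pi.neg_apply, mul_neg, sum_neg_distrib, neg_div] at hle
  exact neg_le_neg_iff.mp hle

theorem edgeCount_eq_sum {N D M : ℕ} (E : Fin N × Fin D → Fin M)
    (S : Finset (Fin N)) (Y : Finset (Fin M)) :
    edgeCount E S Y = ∑ x ∈ S, #{i | E (x, i) ∈ Y} := by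
  simp only [edgeCount, card_filter, sum_product]

theorem extractor_min_entropy_general {N D M : ℕ} (E : Fin N × Fin D → Fin M)
    (K : ℕ) (ε : ℝ)
    (hext : IsExtractor E K ε)
    (P : Fin N → ℝ) (hP0 : ∀ x, 0 ≤ P x) (hP1 : ∑ x, P x = 1)
    (hPmin : ∀ x, P x ≤ 1 / K)
    (Y : Finset (Fin M)) :
    |(∑ x, P x * (((univ.filter (fun i : Fin D => E (x, i) ∈ Y)).card : ℝ) / D))
        - (Y.card : ℝ) / M| ≤ ε := by
  set f : Fin N → ℝ := fun x => (#{i | E (x, i) ∈ Y} : ℝ) / D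
  have hdensity : ∀ S, #S = K → (edgeCount E S Y : ℝ) / (D * #S) = (∑ x ∈ S, f x) / K :=
    fun S hSK => by
      rw [edgeCount_eq_sum, Nat.cast_sum, hSK, ← sum_div, div_div, mul_comm]
  obtain ⟨S₁, hS₁, hupper⟩ := exists_card_eq_weighted_sum_le_average f P hP0 hP1 hPmin
  obtain ⟨S₂, hS₂, hlower⟩ := exists_card_eq_average_le_weighted_sum f P hP0 hP1 hPmin
  have h₁ := hext S₁ Y hS₁.ge
  have h₂ := hext S₂ Y hS₂.ge
  rw [hdensity S₁ hS₁, abs_lt] at h₁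
  rw [hdensity S₂ hS₂, abs_lt] at h₂
  rw [abs_le]
  constructor <;> linarith

/-- A `(K, ε)`-extractor works for every distribution `P` on the left part
with min-entropy at least `log₂ K` (i.e. `P x ≤ 1/K` for all `x`): the
probability that a uniformly random edge label applied to a `P`-random left
vertex lands in `Y` is `ε`-close to `#Y/M`. -/
theorem extractor_min_entropy {N D M : ℕ} (E : Fin N × Fin D → Fin M)
    (K : ℕ) (ε : ℝ) (hK : 0 < K) (hKN : K ≤ N)
    (hext : IsExtractor E K ε)
    (P : Fin N → ℝ) (hP0 : ∀ x, 0 ≤ P x) (hP1 : ∑ x, P x = 1)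
    (hPmin : ∀ x, P x ≤ 1 / K)
    (Y : Finset (Fin M)) :
    |(∑ x, P x * (((univ.filter (fun i : Fin D => E (x, i) ∈ Y)).card : ℝ) / D))
        - (Y.card : ℝ) / M| ≤ ε :=
  extractor_min_entropy_general E K ε hext P hP0 hP1 hPmin Y
end

section
/- Let E : Fin N × Fin D → Fin M be a (K, ε)-extractor with K an integer, 0 < K ≤ N, and let S be a set of left vertices with #S ≤ K. Then the number of elements of S that are weakly dangerous in S is at most 4εK. -/
open Finset

/-- A right vertex `z` is bad for `S` if it has more than `2DK/M` neighbors
in `S` (counted with multiplicity). -/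
def BadFor {N D M : ℕ} (E : Fin N × Fin D → Fin M) (K : ℕ)
    (S : Finset (Fin N)) (z : Fin M) : Prop :=
  (2 * D * K : ℝ) / M <
    (((S ×ˢ (univ : Finset (Fin D))).filter (fun p => E p = z)).card : ℝ)

/-- A left vertex `x` is weakly dangerous in `S` if at least half of its `D`
edge labels lead to vertices that are bad for `S`. -/
def WeaklyDangerousIn {N D M : ℕ} (E : Fin N × Fin D → Fin M) (K : ℕ)
    (S : Finset (Fin N)) (x : Fin N) : Prop :=
  (D : ℝ) / 2 ≤ ({i : Fin D | BadFor E K S (E (x, i))}.ncard : ℝ)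


/-!
Let `B` be the set of right vertices that are bad for `S`. Padding `S` to a set of exactly `K`
left vertices and applying the extractor property to it and `B` gives
`#B · 2DK/M ≤ #E(S,B) ≤ DK (#B/M + ε)`, so the bad vertices have density at most `ε`.
Padding the set `T` of weakly dangerous vertices in the same way gives
`#T · D/2 ≤ #E(T,B) ≤ DK (#B/M + ε) ≤ 2DKε`, that is `#T ≤ 4εK`.
-/

namespace edgeCount

variable {N D M : ℕ} (E : Fin N × Fin D → Fin M)

theorem eq_sum_left (S : Finset (Fin N)) (Y : Finset (Fin M)) :
    edgeCount E S Y = ∑ x ∈ S, #{i | E (x, i) ∈ Y} := by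
  rw [edgeCount, card_filter, sum_product]
  exact sum_congr rfl fun x _ => (card_filter _ _).symm

theorem eq_sum_right (S : Finset (Fin N)) (Y : Finset (Fin M)) :
    edgeCount E S Y = ∑ z ∈ Y, #{p ∈ S ×ˢ univ | E p = z} := by
  classical
  rw [edgeCount, card_eq_sum_card_fiberwise (f := E) (t := Y)
    fun _ hp => mem_coe.mpr (mem_filter.mp (mem_coe.mp hp)).2]
  refine sum_congr rfl fun z hz => congrArg card ?_
  rw [filter_filter]
  exact filter_congr fun p _ => ⟨And.right, fun h => ⟨h ▸ hz, h⟩⟩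

theorem mono {S S' : Finset (Fin N)} (h : S ⊆ S') (Y : Finset (Fin M)) :
    edgeCount E S Y ≤ edgeCount E S' Y :=
  card_le_card (filter_subset_filter _ (product_subset_product_left h))

theorem le_card_mul (S : Finset (Fin N)) (Y : Finset (Fin M)) :
    edgeCount E S Y ≤ #S * D :=
  (card_filter_le _ _).trans (by simp)

theorem card_mul_le_of_le_card_labels {S : Finset (Fin N)} {Y : Finset (Fin M)} {c : ℝ}
    (h : ∀ x ∈ S, c ≤ #{i | E (x, i) ∈ Y}) : #S * c ≤ edgeCount E S Y := by
  rw [eq_sum_left, Nat.cast_sum, ← nsmul_eq_mul, ← sum_const]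
  exact sum_le_sum h

theorem card_mul_le_of_le_card_fiber {S : Finset (Fin N)} {Y : Finset (Fin M)} {c : ℝ}
    (h : ∀ z ∈ Y, c ≤ #{p ∈ S ×ˢ univ | E p = z}) : #Y * c ≤ edgeCount E S Y := by
  rw [eq_sum_right, Nat.cast_sum, ← nsmul_eq_mul, ← sum_const]
  exact sum_le_sum h

end edgeCount

namespace IsExtractor

variable {N D M : ℕ} {E : Fin N × Fin D → Fin M} {K : ℕ} {ε : ℝ}

theorem edgeCount_le (hext : IsExtractor E K ε) (hKN : K ≤ N) {T : Finset (Fin N)}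
    (hT : #T ≤ K) (Y : Finset (Fin M)) :
    (edgeCount E T Y : ℝ) ≤ D * K * (#Y / M + ε) := by
  obtain ⟨T', hTT', -, rfl⟩ :=
    exists_subsuperset_card_eq (subset_univ T) hT (by simpa using hKN)
  refine (Nat.cast_le.mpr (edgeCount.mono E hTT' Y)).trans ?_
  rcases (Nat.zero_le (D * #T')).eq_or_lt with hzero | hpos
  · have hempty : edgeCount E T' Y = 0 := by
      have := edgeCount.le_card_mul E T' Y
      lia
    have hzero' : (D : ℝ) * #T' = 0 := by exact_mod_cast hzero.symm
    simp [hempty, hzero']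
  · have hpos' : (0 : ℝ) < D * #T' := by exact_mod_cast hpos
    have := (abs_lt.mp (hext T' Y le_rfl)).2
    rw [sub_lt_iff_lt_add, div_lt_iff₀ hpos'] at this
    linarith

theorem edgeCount_badFor_le (hext : IsExtractor E K ε) (hKN : K ≤ N) {S T : Finset (Fin N)}
    [DecidablePred (BadFor E K S)] (hS : #S ≤ K) (hT : #T ≤ K) :
    (edgeCount E T {z | BadFor E K S z} : ℝ) ≤ 2 * D * K * ε := by
  set B : Finset (Fin M) := {z | BadFor E K S z}
  have hB : #B * (2 * D * K / M : ℝ) ≤ edgeCount E S B :=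
    edgeCount.card_mul_le_of_le_card_fiber E fun z hz => (mem_filter.mp hz).2.le
  have hS' := hext.edgeCount_le hKN hS B
  have hT' := hext.edgeCount_le hKN hT B
  have : #B * (2 * D * K / M : ℝ) = 2 * (D * K * (#B / M)) := by ring
  linarith

end IsExtractor

theorem card_weakly_dangerous_le_general {N D M : ℕ} (E : Fin N × Fin D → Fin M)
    (K : ℕ) (ε : ℝ) (hKN : K ≤ N) (hD : 0 < D)
    (hext : IsExtractor E K ε)
    (S : Finset (Fin N)) (hS : S.card ≤ K) :
    (({x : Fin N | x ∈ S ∧ WeaklyDangerousIn E K S x}.ncard : ℝ)) ≤ 4 * ε * K := by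
  classical
  set T := S.filter (WeaklyDangerousIn E K S)
  have hT : {x : Fin N | x ∈ S ∧ WeaklyDangerousIn E K S x} = ↑T := by ext; simp [T]
  have lower : #T * (D / 2 : ℝ) ≤ edgeCount E T {z | BadFor E K S z} := by
    refine edgeCount.card_mul_le_of_le_card_labels E fun x hx => ?_
    have hdanger : WeaklyDangerousIn E K S x := (mem_filter.mp hx).2
    rw [WeaklyDangerousIn, ← coe_filter_univ, Set.ncard_coe_finset] at hdanger
    simpa only [mem_filter, mem_univ, true_and] using hdanger
  have upper : (edgeCount E T {z | BadFor E K S z} : ℝ) ≤ 2 * D * K * ε :=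
    hext.edgeCount_badFor_le hKN hS ((card_filter_le _ _).trans hS)
  rw [hT, Set.ncard_coe_finset]
  have hD' : (0 : ℝ) < D / 2 := by positivity
  exact le_of_mul_le_mul_right (by linarith) hD'

/-- For a `(K, ε)`-extractor and a set `S` of at most `K` left vertices, the
number of elements of `S` that are weakly dangerous in `S` is at most `4εK`. -/
theorem card_weakly_dangerous_le {N D M : ℕ} (E : Fin N × Fin D → Fin M)
    (K : ℕ) (ε : ℝ) (hK : 0 < K) (hKN : K ≤ N) (hD : 0 < D) (hM : 0 < M)
    (hext : IsExtractor E K ε)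
    (S : Finset (Fin N)) (hS : S.card ≤ K) :
    (({x : Fin N | x ∈ S ∧ WeaklyDangerousIn E K S x}.ncard : ℝ)) ≤ 4 * ε * K :=
  card_weakly_dangerous_le_general E K ε hKN hD hext S hS
end
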